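/- arXiv:math-ph/0404009 — 4 statements merged into one kernel-verified Lean document; each statement's English description precedes it below -/
import Mathlib

section
/- For a finite-rank self-adjoint operator γ on a Hilbert space with spectral decomposition γ = Σ_n λ_n |ξ_n⟩⟨ξ_n| (orthonormal ξ_n), and γ' = Σ_ν λ'_ν |ξ'_ν⟩⟨ξ'_ν|, the exchange integral satisfies |∫∫ conj(γ(x,y)) γ'(x,y) / |x−y| dx dy| ≤ ∫∫ ρ_{|γ|}(x) ρ_{|γ'|}(y) / |x−y| dx dy, where γ(x,y) = Σ_n λ_n ξ_n(x) conj(ξ_n(y)) and ρ_{|γ|}(x) = Σ_n |λ_n| |ξ_n(x)|². -/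
/-!
Expanding both kernels in their eigenfunctions, the triangle inequality gives
`|γ(x,y)| |γ'(x,y)| ≤ ∑_{n,ν} |λ_n| |λ'_ν| |ξ_n(x)| |ξ_n(y)| |ξ'_ν(x)| |ξ'_ν(y)|`, and the
termwise AM–GM inequality `ab ≤ (a² + b²)/2` with `a = |ξ_n(x)| |ξ'_ν(y)|`, `b = |ξ'_ν(x)| |ξ_n(y)|`
bounds this by `(ρ(x) ρ'(y) + ρ'(x) ρ(y))/2`. Since `1/|x-y|` is symmetric, both halves
integrate to the direct term.
-/

open MeasureTheory ComplexConjugate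

section SpectralKernel

variable {ι α : Type*} [Fintype ι]

noncomputable def spectralKernel (lam : ι → ℝ) (ξ : ι → α → ℂ) (x y : α) : ℂ :=
  ∑ n, (lam n : ℂ) * ξ n x * conj (ξ n y)

noncomputable def absDensity (lam : ι → ℝ) (ξ : ι → α → ℂ) (x : α) : ℝ :=
  ∑ n, |lam n| * ‖ξ n x‖ ^ 2

theorem norm_spectralKernel_le (lam : ι → ℝ) (ξ : ι → α → ℂ) (x y : α) :
    ‖spectralKernel lam ξ x y‖ ≤ ∑ n, |lam n| * (‖ξ n x‖ * ‖ξ n y‖) :=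
  (norm_sum_le _ _).trans_eq <| Finset.sum_congr rfl fun n _ => by
    simp only [norm_mul, Complex.norm_real, Real.norm_eq_abs, RCLike.norm_conj, mul_assoc]

theorem sum_mul_sum_le_add_div_two {κ : Type*} [Fintype κ] {c : ι → ℝ} {c' : κ → ℝ}
    (hc : ∀ n, 0 ≤ c n) (hc' : ∀ ν, 0 ≤ c' ν) (u v : ι → ℝ) (u' v' : κ → ℝ) :
    (∑ n, c n * (u n * v n)) * (∑ ν, c' ν * (u' ν * v' ν)) ≤
      ((∑ n, c n * u n ^ 2) * (∑ ν, c' ν * v' ν ^ 2)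
        + (∑ ν, c' ν * u' ν ^ 2) * (∑ n, c n * v n ^ 2)) / 2 := by
  rw [Finset.sum_mul_sum, Finset.sum_mul_sum, Finset.sum_mul_sum, Finset.sum_comm (γ := κ),
    ← Finset.sum_add_distrib, Finset.sum_div]
  gcongr with n _
  rw [← Finset.sum_add_distrib, Finset.sum_div]
  gcongr with ν _
  nlinarith [mul_nonneg (mul_nonneg (hc n) (hc' ν)) (sq_nonneg (u n * v' ν - u' ν * v n))]

theorem norm_spectralKernel_mul_le {κ : Type*} [Fintype κ] (lam : ι → ℝ) (ξ : ι → α → ℂ)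
    (lam' : κ → ℝ) (ξ' : κ → α → ℂ) (x y : α) :
    ‖spectralKernel lam ξ x y‖ * ‖spectralKernel lam' ξ' x y‖ ≤
      (absDensity lam ξ x * absDensity lam' ξ' y + absDensity lam' ξ' x * absDensity lam ξ y) / 2 :=
  calc ‖spectralKernel lam ξ x y‖ * ‖spectralKernel lam' ξ' x y‖
      ≤ (∑ n, |lam n| * (‖ξ n x‖ * ‖ξ n y‖)) * ∑ ν, |lam' ν| * (‖ξ' ν x‖ * ‖ξ' ν y‖) :=
        mul_le_mul (norm_spectralKernel_le lam ξ x y) (norm_spectralKernel_le lam' ξ' x y)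
          (norm_nonneg _) ((norm_nonneg _).trans (norm_spectralKernel_le lam ξ x y))
    _ ≤ _ := sum_mul_sum_le_add_div_two (fun _ => abs_nonneg _) (fun _ => abs_nonneg _) _ _ _ _

theorem norm_exchange_integrand_le {κ E : Type*} [Fintype κ] [SeminormedAddCommGroup E]
    (lam : ι → ℝ) (ξ : ι → E → ℂ) (lam' : κ → ℝ) (ξ' : κ → E → ℂ) (x y : E) :
    ‖conj (spectralKernel lam ξ x y) * spectralKernel lam' ξ' x y / (‖x - y‖ : ℂ)‖ ≤
      (absDensity lam ξ x * absDensity lam' ξ' y / ‖x - y‖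
        + absDensity lam ξ y * absDensity lam' ξ' x / ‖y - x‖) / 2 := by
  rw [norm_div, norm_mul, RCLike.norm_conj, Complex.norm_real, norm_norm, norm_sub_rev y x,
    ← add_div, div_right_comm, mul_comm (absDensity lam ξ y)]
  gcongr
  exact norm_spectralKernel_mul_le lam ξ lam' ξ' x y

end SpectralKernel

theorem norm_integral_le_of_norm_le_avg_swap {α G : Type*} [MeasurableSpace α]
    [NormedAddCommGroup G] [NormedSpace ℝ G] {μ : Measure α} [SFinite μ]
    {f : α × α → G} {F : α × α → ℝ} (hF : Integrable F (μ.prod μ))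
    (hf : ∀ p, ‖f p‖ ≤ (F p + F p.swap) / 2) :
    ‖∫ p, f p ∂μ.prod μ‖ ≤ ∫ p, F p ∂μ.prod μ := by
  have hF_swap : Integrable (fun p => F p.swap) (μ.prod μ) := hF.swap
  calc ‖∫ p, f p ∂μ.prod μ‖ ≤ ∫ p, (F p + F p.swap) / 2 ∂μ.prod μ :=
        norm_integral_le_of_norm_le ((hF.add hF_swap).div_const 2) (ae_of_all _ hf)
    _ = ∫ p, F p ∂μ.prod μ := by
        rw [integral_div, integral_add hF hF_swap, integral_prod_swap F]
        ring

theorem exchange_dominated_by_direct_general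
    (N M : ℕ) (lam : Fin N → ℝ) (lam' : Fin M → ℝ)
    (ξ : Fin N → EuclideanSpace ℝ (Fin 3) → ℂ)
    (ξ' : Fin M → EuclideanSpace ℝ (Fin 3) → ℂ)
    (γker : EuclideanSpace ℝ (Fin 3) → EuclideanSpace ℝ (Fin 3) → ℂ)
    (γ'ker : EuclideanSpace ℝ (Fin 3) → EuclideanSpace ℝ (Fin 3) → ℂ)
    (hγ : ∀ x y, γker x y = ∑ n, (lam n : ℂ) * ξ n x * (starRingEnd ℂ) (ξ n y))
    (hγ' : ∀ x y, γ'ker x y = ∑ n, (lam' n : ℂ) * ξ' n x * (starRingEnd ℂ) (ξ' n y))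
    (ρ ρ' : EuclideanSpace ℝ (Fin 3) → ℝ)
    (hρ : ∀ x, ρ x = ∑ n, |lam n| * ‖ξ n x‖ ^ 2)
    (hρ' : ∀ x, ρ' x = ∑ n, |lam' n| * ‖ξ' n x‖ ^ 2)
    (hint' : Integrable (fun p : EuclideanSpace ℝ (Fin 3) × EuclideanSpace ℝ (Fin 3) =>
      ρ p.1 * ρ' p.2 / ‖p.1 - p.2‖)) :
    ‖∫ p : EuclideanSpace ℝ (Fin 3) × EuclideanSpace ℝ (Fin 3),
        (starRingEnd ℂ) (γker p.1 p.2) * γ'ker p.1 p.2 / (‖p.1 - p.2‖ : ℂ)‖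
      ≤ ∫ p : EuclideanSpace ℝ (Fin 3) × EuclideanSpace ℝ (Fin 3),
          ρ p.1 * ρ' p.2 / ‖p.1 - p.2‖ := by
  obtain rfl : γker = spectralKernel lam ξ := funext₂ hγ
  obtain rfl : γ'ker = spectralKernel lam' ξ' := funext₂ hγ'
  obtain rfl : ρ = absDensity lam ξ := funext hρ
  obtain rfl : ρ' = absDensity lam' ξ' := funext hρ'
  exact norm_integral_le_of_norm_le_avg_swap hint' fun p =>
    norm_exchange_integrand_le lam ξ lam' ξ' p.1 p.2

/-- For finite-rank self-adjoint operators `γ = Σ λ_n |ξ_n⟩⟨ξ_n|` and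
`γ' = Σ λ'_ν |ξ'_ν⟩⟨ξ'_ν|` on `L²(ℝ³)` (given via their spectral decompositions with
orthonormal eigenfunctions), the exchange integral is dominated by the direct integral
of the densities of the moduli:
`|∫∫ conj(γ(x,y)) γ'(x,y)/|x−y| dx dy| ≤ ∫∫ ρ_{|γ|}(x) ρ_{|γ'|}(y)/|x−y| dx dy`. -/
theorem exchange_dominated_by_direct
    (N M : ℕ) (lam : Fin N → ℝ) (lam' : Fin M → ℝ)
    (ξ : Fin N → EuclideanSpace ℝ (Fin 3) → ℂ)
    (ξ' : Fin M → EuclideanSpace ℝ (Fin 3) → ℂ)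
    (hortho : ∀ i j, ∫ x, (starRingEnd ℂ) (ξ i x) * ξ j x = if i = j then 1 else 0)
    (hortho' : ∀ i j, ∫ x, (starRingEnd ℂ) (ξ' i x) * ξ' j x = if i = j then 1 else 0)
    (γker : EuclideanSpace ℝ (Fin 3) → EuclideanSpace ℝ (Fin 3) → ℂ)
    (γ'ker : EuclideanSpace ℝ (Fin 3) → EuclideanSpace ℝ (Fin 3) → ℂ)
    (hγ : ∀ x y, γker x y = ∑ n, (lam n : ℂ) * ξ n x * (starRingEnd ℂ) (ξ n y))
    (hγ' : ∀ x y, γ'ker x y = ∑ n, (lam' n : ℂ) * ξ' n x * (starRingEnd ℂ) (ξ' n y))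
    (ρ ρ' : EuclideanSpace ℝ (Fin 3) → ℝ)
    (hρ : ∀ x, ρ x = ∑ n, |lam n| * ‖ξ n x‖ ^ 2)
    (hρ' : ∀ x, ρ' x = ∑ n, |lam' n| * ‖ξ' n x‖ ^ 2)
    (hint : Integrable (fun p : EuclideanSpace ℝ (Fin 3) × EuclideanSpace ℝ (Fin 3) =>
      (starRingEnd ℂ) (γker p.1 p.2) * γ'ker p.1 p.2 / (‖p.1 - p.2‖ : ℂ)))
    (hint' : Integrable (fun p : EuclideanSpace ℝ (Fin 3) × EuclideanSpace ℝ (Fin 3) =>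
      ρ p.1 * ρ' p.2 / ‖p.1 - p.2‖)) :
    ‖∫ p : EuclideanSpace ℝ (Fin 3) × EuclideanSpace ℝ (Fin 3),
        (starRingEnd ℂ) (γker p.1 p.2) * γ'ker p.1 p.2 / (‖p.1 - p.2‖ : ℂ)‖
      ≤ ∫ p : EuclideanSpace ℝ (Fin 3) × EuclideanSpace ℝ (Fin 3),
          ρ p.1 * ρ' p.2 / ‖p.1 - p.2‖ :=
  exchange_dominated_by_direct_general N M lam lam' ξ ξ' γker γ'ker hγ hγ' ρ ρ' hρ hρ' hint'
end

section
/- (Nenciu's lemma) Let P₀ be an orthogonal projection on a Hilbert space, A a bounded operator, and ε ∈ ℝ with 4|ε|‖A‖ < 1. Set a = P₀ A (1−P₀) + (1−P₀) A* P₀. Then there exists a bounded operator B_ε with ‖B_ε‖ ≤ 4‖A‖² such that P_ε := P₀ + ε a + ε² B_ε is an orthogonal projection. -/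
/-!
With `q = ε a`, one has `P₀ q + q P₀ = q`, so `s = P₀ + q - 1/2` satisfies `s² = 1/4 + q²`.
Hence the spectrum of `s` avoids `(-1/2, 1/2)`, and the spectral projection `P = 1[s > 0]`
is an orthogonal projection. On the spectrum, `|1[x > 0] - (x + 1/2)| ≤ x² - 1/4`, so the
functional calculus gives `‖P - (P₀ + q)‖ ≤ ‖s² - 1/4‖ = ‖q‖² ≤ ε² ‖A‖²`, the last step
because the off-diagonal part of `A` with respect to `P₀` has norm at most `‖A‖`.
-/

/-- Continuous, and equal to the indicator of `[0, ∞)` outside `(-1/2, 1/2)`. -/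
noncomputable def rampStep (x : ℝ) : ℝ := max 0 (min 1 (x + 1 / 2))

lemma continuous_rampStep : Continuous rampStep := by unfold rampStep; fun_prop

lemma rampStep_mul_self {x : ℝ} (hx : 1 / 4 ≤ x ^ 2) : rampStep x * rampStep x = rampStep x := by
  unfold rampStep
  rcases le_or_gt (1 / 2) x with h | h
  · rw [min_eq_left (by linarith), max_eq_right zero_le_one, one_mul]
  · rw [min_eq_right (by nlinarith), max_eq_left (by nlinarith), zero_mul]

lemma abs_rampStep_sub_le {x : ℝ} (hx : 1 / 4 ≤ x ^ 2) :
    |rampStep x - (x + 1 / 2)| ≤ x ^ 2 - 1 / 4 := by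
  unfold rampStep
  rcases le_or_gt (1 / 2) x with h | h
  · rw [min_eq_left (by linarith), max_eq_right zero_le_one, abs_le]
    constructor <;> nlinarith
  · rw [min_eq_right (by nlinarith), max_eq_left (by nlinarith), abs_le]
    constructor <;> nlinarith

lemma sq_add_sub_half {R : Type*} [Ring R] [Algebra ℝ R] {p q : R} (hp : IsIdempotentElem p)
    (hpq : p * q + q * p = q) :
    (p + q - algebraMap ℝ R (1 / 2)) ^ 2 = algebraMap ℝ R (1 / 4) + q ^ 2 := by
  have hpq2 : (p + q) ^ 2 = p + q + q ^ 2 := calc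
    (p + q) ^ 2 = p * p + (p * q + q * p) + q ^ 2 := by noncomm_ring
    _ = p + q + q ^ 2 := by rw [hp.eq, hpq]
  simp only [Algebra.algebraMap_eq_smul_one]
  rw [sq, sub_mul, mul_sub, mul_sub, ← sq, hpq2, smul_mul_assoc, one_mul, mul_smul_comm, mul_one,
    smul_mul_assoc, one_mul, smul_smul]
  module

section CStarAlgebra

variable {A : Type*} [CStarAlgebra A] [PartialOrder A] [StarOrderedRing A]

theorem IsSelfAdjoint.exists_isStarProjection_norm_sub_le {s : A} (hs : IsSelfAdjoint s)
    (h : algebraMap ℝ A (1 / 4) ≤ s ^ 2) :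
    ∃ p : A, IsStarProjection p ∧
      ‖p - (s + algebraMap ℝ A (1 / 2))‖ ≤ ‖s ^ 2 - algebraMap ℝ A (1 / 4)‖ := by
  have hspec : ∀ x ∈ spectrum ℝ s, 1 / 4 ≤ x ^ 2 := by
    intro x hx
    refine (algebraMap_le_iff_le_spectrum (hs.pow 2)).1 h _ ?_
    rw [← cfc_pow_id (R := ℝ) s 2, cfc_map_spectrum (fun x : ℝ ↦ x ^ 2) s]
    exact ⟨x, hx, rfl⟩
  have hcont : ContinuousOn rampStep (spectrum ℝ s) := continuous_rampStep.continuousOn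
  refine ⟨cfc rampStep s, ⟨?_, cfc_predicate _ _⟩, ?_⟩
  · rw [IsIdempotentElem, ← cfc_mul _ _ s]
    exact cfc_congr fun x hx ↦ rampStep_mul_self (hspec x hx)
  have hdiff : cfc rampStep s - (s + algebraMap ℝ A (1 / 2))
      = cfc (fun x ↦ rampStep x - (x + 1 / 2)) s := by
    rw [cfc_sub _ _ s, cfc_add_const _ _ s, cfc_id' ℝ s]
  have hsq : s ^ 2 - algebraMap ℝ A (1 / 4) = cfc (fun x : ℝ ↦ x ^ 2 - 1 / 4) s := by
    rw [cfc_sub _ _ s, cfc_pow_id s 2, cfc_const _ s]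
  rw [hdiff, hsq]
  refine norm_cfc_le (norm_nonneg _) fun x hx ↦ ?_
  calc ‖rampStep x - (x + 1 / 2)‖ ≤ ‖x ^ 2 - 1 / 4‖ :=
        (abs_rampStep_sub_le (hspec x hx)).trans (le_abs_self _)
    _ ≤ ‖cfc (fun x : ℝ ↦ x ^ 2 - 1 / 4) s‖ :=
        norm_apply_le_norm_cfc (fun x : ℝ ↦ x ^ 2 - 1 / 4) s hx

theorem IsStarProjection.exists_isStarProjection_norm_sub_add_le {p q : A}
    (hp : IsStarProjection p) (hq : IsSelfAdjoint q) (hpq : p * q + q * p = q) :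
    ∃ P : A, IsStarProjection P ∧ ‖P - (p + q)‖ ≤ ‖q‖ ^ 2 := by
  set s := p + q - algebraMap ℝ A (1 / 2)
  have hs : IsSelfAdjoint s := (hp.isSelfAdjoint.add hq).sub (.algebraMap A (.all _))
  have hs2 : s ^ 2 = algebraMap ℝ A (1 / 4) + q ^ 2 := sq_add_sub_half hp.isIdempotentElem hpq
  obtain ⟨P, hP, hdist⟩ := hs.exists_isStarProjection_norm_sub_le
    (by rw [hs2]; exact le_add_of_nonneg_right hq.sq_nonneg)
  have hq2 : ‖q ^ 2‖ = ‖q‖ ^ 2 := by simpa using hq.norm_pow_two_pow 1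
  refine ⟨P, hP, ?_⟩
  rwa [hs2, add_sub_cancel_left, sub_add_cancel, hq2] at hdist

end CStarAlgebra

section OffDiagonal

variable {R : Type*} [Ring R] [StarRing R]

def offDiagonalPart (p x : R) : R := p * x * (1 - p) + (1 - p) * star x * p

lemma IsSelfAdjoint.offDiagonalPart {p : R} (hp : IsSelfAdjoint p) (x : R) :
    IsSelfAdjoint (offDiagonalPart p x) := by
  simp only [IsSelfAdjoint, _root_.offDiagonalPart, star_add, star_mul, star_sub, star_one,
    star_star, hp.star_eq, mul_assoc, add_comm]

lemma IsIdempotentElem.mul_offDiagonalPart_add {p : R} (hp : IsIdempotentElem p) (x : R) :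
    p * offDiagonalPart p x + offDiagonalPart p x * p = offDiagonalPart p x := by
  have hpq : p * (1 - p) = 0 := by rw [mul_sub, mul_one, hp.eq, sub_self]
  have hqp : (1 - p) * p = 0 := by rw [sub_mul, one_mul, hp.eq, sub_self]
  simp only [_root_.offDiagonalPart, mul_add, add_mul, ← mul_assoc, hp.eq, hpq, zero_mul]
  simp only [mul_assoc, hqp, hp.eq, mul_zero]
  abel

end OffDiagonal

section InnerProductSpace

variable {𝕜 E : Type*} [RCLike 𝕜] [NormedAddCommGroup E] [InnerProductSpace 𝕜 E]
  [CompleteSpace E]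

theorem IsStarProjection.norm_offDiagonalPart_le {p : E →L[𝕜] E} (hp : IsStarProjection p)
    (x : E →L[𝕜] E) : ‖offDiagonalPart p x‖ ≤ ‖x‖ := by
  obtain ⟨K, _, rfl⟩ := isStarProjection_iff_eq_starProjection.mp hp
  rw [offDiagonalPart, ← K.starProjection_orthogonal']
  refine ContinuousLinearMap.opNorm_le_bound _ (norm_nonneg x) fun v ↦ ?_
  set u := K.starProjection (x (Kᗮ.starProjection v))
  set w := Kᗮ.starProjection (star x (K.starProjection v))
  have hu : ‖u‖ ≤ ‖x‖ * ‖Kᗮ.starProjection v‖ :=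
    (K.norm_starProjection_apply_le _).trans (x.le_opNorm _)
  have hw : ‖w‖ ≤ ‖x‖ * ‖K.starProjection v‖ :=
    (Kᗮ.norm_starProjection_apply_le _).trans <| (norm_star x).symm ▸ (star x).le_opNorm _
  have hpyth : ‖u + w‖ ^ 2 = ‖u‖ ^ 2 + ‖w‖ ^ 2 := by
    simp only [sq]
    exact norm_add_sq_eq_norm_sq_add_norm_sq_of_inner_eq_zero _ _ <|
      K.inner_right_of_mem_orthogonal (K.starProjection_apply_mem _)
        (Kᗮ.starProjection_apply_mem _)
  change ‖u + w‖ ≤ ‖x‖ * ‖v‖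
  refine (pow_le_pow_iff_left₀ (norm_nonneg _) (by positivity) two_ne_zero).1 ?_
  calc ‖u + w‖ ^ 2 = ‖u‖ ^ 2 + ‖w‖ ^ 2 := hpyth
    _ ≤ (‖x‖ * ‖Kᗮ.starProjection v‖) ^ 2 + (‖x‖ * ‖K.starProjection v‖) ^ 2 := by gcongr
    _ = (‖x‖ * ‖v‖) ^ 2 := by
      rw [mul_pow, mul_pow, mul_pow, K.norm_sq_eq_add_norm_sq_starProjection v]; ring

end InnerProductSpace

theorem exists_eq_smul_of_norm_le_mul {𝕜 E : Type*} [NormedField 𝕜] [NormedAddCommGroup E]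
    [NormedSpace 𝕜 E] {d : E} {c : 𝕜} {C : ℝ} (hC : 0 ≤ C) (h : ‖d‖ ≤ ‖c‖ * C) :
    ∃ b : E, d = c • b ∧ ‖b‖ ≤ C := by
  rcases eq_or_ne c 0 with rfl | hc
  · exact ⟨0, by simpa using h, by simpa using hC⟩
  refine ⟨c⁻¹ • d, (smul_inv_smul₀ hc d).symm, ?_⟩
  rw [norm_smul, norm_inv, inv_mul_le_iff₀ (norm_pos_iff.mpr hc)]
  exact h

theorem nenciu_lemma_general {H : Type*} [NormedAddCommGroup H] [InnerProductSpace ℂ H]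
    [CompleteSpace H]
    (P₀ A : H →L[ℂ] H) (hP₀sa : IsSelfAdjoint P₀) (hP₀idem : IsIdempotentElem P₀)
    (ε : ℝ) :
    ∃ B : H →L[ℂ] H, ‖B‖ ≤ 4 * ‖A‖ ^ 2 ∧
      IsSelfAdjoint (P₀ + (ε : ℂ) • (P₀ ∘L A ∘L (1 - P₀) + (1 - P₀) ∘L (ContinuousLinearMap.adjoint A) ∘L P₀)
          + ((ε : ℂ) ^ 2) • B) ∧
      IsIdempotentElem (P₀ + (ε : ℂ) • (P₀ ∘L A ∘L (1 - P₀) + (1 - P₀) ∘L (ContinuousLinearMap.adjoint A) ∘L P₀)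
          + ((ε : ℂ) ^ 2) • B) := by
  have hP₀ : IsStarProjection P₀ := ⟨hP₀idem, hP₀sa⟩
  have ha : P₀ ∘L A ∘L (1 - P₀) + (1 - P₀) ∘L (ContinuousLinearMap.adjoint A) ∘L P₀ =
      offDiagonalPart P₀ A := by
    simp only [offDiagonalPart, ← ContinuousLinearMap.mul_def, mul_assoc,
      ContinuousLinearMap.star_eq_adjoint]
  rw [ha]
  set q := (ε : ℂ) • offDiagonalPart P₀ A
  have hq : IsSelfAdjoint q := .smul (by simp [IsSelfAdjoint]) (hP₀sa.offDiagonalPart A)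
  have hP₀q : P₀ * q + q * P₀ = q := by
    simp only [q, mul_smul_comm, smul_mul_assoc, ← smul_add, hP₀idem.mul_offDiagonalPart_add]
  obtain ⟨P, hP, hPq⟩ := hP₀.exists_isStarProjection_norm_sub_add_le hq hP₀q
  obtain ⟨B, hB, hBA⟩ := exists_eq_smul_of_norm_le_mul (c := (ε : ℂ) ^ 2) (sq_nonneg ‖A‖) <|
    calc ‖P - (P₀ + q)‖ ≤ ‖q‖ ^ 2 := hPq
      _ ≤ (|ε| * ‖A‖) ^ 2 := by
        gcongr
        rw [norm_smul, Complex.norm_real, Real.norm_eq_abs]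
        gcongr
        exact hP₀.norm_offDiagonalPart_le A
      _ = ‖(ε : ℂ) ^ 2‖ * ‖A‖ ^ 2 := by simp [mul_pow]
  refine ⟨B, hBA.trans (le_mul_of_one_le_left (sq_nonneg _) (by norm_num)), ?_⟩
  rw [← hB, add_sub_cancel]
  exact ⟨hP.isSelfAdjoint, hP.isIdempotentElem⟩

/-- Nenciu's lemma: Let `P₀` be an orthogonal projection on a Hilbert space,
`A` a bounded operator, and `ε ∈ ℝ` with `4|ε|‖A‖ < 1`. Set
`a = P₀ A (1−P₀) + (1−P₀) A* P₀`. Then there is a bounded operator `B_ε` with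
`‖B_ε‖ ≤ 4‖A‖²` such that `P_ε := P₀ + ε a + ε² B_ε` is an orthogonal projection. -/
theorem nenciu_lemma {H : Type*} [NormedAddCommGroup H] [InnerProductSpace ℂ H]
    [CompleteSpace H]
    (P₀ A : H →L[ℂ] H) (hP₀sa : IsSelfAdjoint P₀) (hP₀idem : IsIdempotentElem P₀)
    (ε : ℝ) (hε : 4 * |ε| * ‖A‖ < 1) :
    ∃ B : H →L[ℂ] H, ‖B‖ ≤ 4 * ‖A‖ ^ 2 ∧
      IsSelfAdjoint (P₀ + (ε : ℂ) • (P₀ ∘L A ∘L (1 - P₀) + (1 - P₀) ∘L (ContinuousLinearMap.adjoint A) ∘L P₀)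
          + ((ε : ℂ) ^ 2) • B) ∧
      IsIdempotentElem (P₀ + (ε : ℂ) • (P₀ ∘L A ∘L (1 - P₀) + (1 - P₀) ∘L (ContinuousLinearMap.adjoint A) ∘L P₀)
          + ((ε : ℂ) ^ 2) • B) :=
  nenciu_lemma_general P₀ A hP₀sa hP₀idem ε
end

section
/- Let u, v be orthonormal vectors in L²(ℝ³)⊗ℂ⁴ (sufficiently regular, e.g. in H¹), and set S = |u⟩⟨u| − |v⟩⟨v| with kernel S(x,y) = u(x)conj(u(y)) − v(x)conj(v(y)). Then Q[S,S] := D[ρ_S, ρ_S] − E[S,S] < 0, where D[ρ,σ] = (1/2)∫∫ conj(ρ(x))σ(y)/|x−y| dx dy with ρ_S(x) = |u(x)|² − |v(x)|², and E[S,S] = (1/2)∫∫ |S(x,y)|²/|x−y| dx dy. -/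
/-!
Pointwise, the direct integrand minus the exchange integrand is `-d(x,y) / |x - y|`, where
`d(x,y) = ‖u x ⊗ v y - v x ⊗ u y‖² = ‖u x‖²‖v y‖² + ‖v x‖²‖u y‖² - 2 Re(⟪v x, u x⟫⟪u y, v y⟫)`
is nonnegative by Cauchy–Schwarz and AM–GM, so `Q[S,S] ≤ 0`. Equality would force `d = 0` off
the null diagonal, i.e. equality in Cauchy–Schwarz: `Re(⟪v x, u x⟫⟪u y, v y⟫) = ‖u x‖²‖v y‖²`
almost everywhere. Integrating in `x` and `y`, the left side gives `|⟨u, v⟩|² = 0` and the right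
side gives `‖u‖²‖v‖² = 1`.
-/

open MeasureTheory

noncomputable section

abbrev R3 := EuclideanSpace ℝ (Fin 3)
abbrev Spinor := EuclideanSpace ℂ (Fin 4)

open scoped InnerProductSpace

section

variable {α 𝕜 E : Type*} [RCLike 𝕜] [NormedAddCommGroup E] [InnerProductSpace 𝕜 E]

lemma re_inner_mul_inner_le (a b c d : E) :
    RCLike.re (⟪b, a⟫_𝕜 * ⟪c, d⟫_𝕜) ≤ ‖a‖ * ‖b‖ * (‖c‖ * ‖d‖) :=
  calc RCLike.re (⟪b, a⟫_𝕜 * ⟪c, d⟫_𝕜)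
      ≤ ‖⟪b, a⟫_𝕜‖ * ‖⟪c, d⟫_𝕜‖ := (RCLike.re_le_norm _).trans (norm_mul_le _ _)
    _ ≤ ‖b‖ * ‖a‖ * (‖c‖ * ‖d‖) := by gcongr <;> exact norm_inner_le_norm _ _
    _ = ‖a‖ * ‖b‖ * (‖c‖ * ‖d‖) := by ring

lemma two_mul_re_inner_mul_inner_le (a b c d : E) :
    2 * RCLike.re (⟪b, a⟫_𝕜 * ⟪c, d⟫_𝕜) ≤ ‖a‖ ^ 2 * ‖d‖ ^ 2 + ‖b‖ ^ 2 * ‖c‖ ^ 2 := by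
  nlinarith [re_inner_mul_inner_le (𝕜 := 𝕜) a b c d, sq_nonneg (‖a‖ * ‖d‖ - ‖b‖ * ‖c‖)]

lemma re_inner_mul_inner_eq_of_two_mul_eq {a b c d : E}
    (h : 2 * RCLike.re (⟪b, a⟫_𝕜 * ⟪c, d⟫_𝕜) = ‖a‖ ^ 2 * ‖d‖ ^ 2 + ‖b‖ ^ 2 * ‖c‖ ^ 2) :
    RCLike.re (⟪b, a⟫_𝕜 * ⟪c, d⟫_𝕜) = ‖a‖ ^ 2 * ‖d‖ ^ 2 := by
  have hnorms : ‖a‖ * ‖d‖ = ‖b‖ * ‖c‖ := by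
    nlinarith [re_inner_mul_inner_le (𝕜 := 𝕜) a b c d, sq_nonneg (‖a‖ * ‖d‖ - ‖b‖ * ‖c‖)]
  have : ‖b‖ ^ 2 * ‖c‖ ^ 2 = ‖a‖ ^ 2 * ‖d‖ ^ 2 := by rw [← mul_pow, ← mul_pow, hnorms]
  linarith

variable (𝕜) in
def exchangeDefect (u v : α → E) (p : α × α) : ℝ :=
  ‖u p.1‖ ^ 2 * ‖v p.2‖ ^ 2 + ‖v p.1‖ ^ 2 * ‖u p.2‖ ^ 2
    - 2 * RCLike.re (⟪v p.1, u p.1⟫_𝕜 * ⟪u p.2, v p.2⟫_𝕜)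

lemma exchangeDefect_nonneg (u v : α → E) (p : α × α) : 0 ≤ exchangeDefect 𝕜 u v p :=
  sub_nonneg.2 (two_mul_re_inner_mul_inner_le _ _ _ _)

lemma re_inner_mul_inner_eq_of_exchangeDefect_eq_zero {u v : α → E} {p : α × α}
    (h : exchangeDefect 𝕜 u v p = 0) :
    RCLike.re (⟪v p.1, u p.1⟫_𝕜 * ⟪u p.2, v p.2⟫_𝕜) = ‖u p.1‖ ^ 2 * ‖v p.2‖ ^ 2 :=
  re_inner_mul_inner_eq_of_two_mul_eq (sub_eq_zero.1 h).symm

variable [MeasurableSpace α] {μ : Measure α}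

lemma MeasureTheory.MemLp.integrable_inner {u v : α → E} (hu : MemLp u 2 μ) (hv : MemLp v 2 μ) :
    Integrable (fun x => ⟪u x, v x⟫_𝕜) μ :=
  (L2.integrable_inner (hu.toLp u) (hv.toLp v)).congr <| by
    filter_upwards [hu.coeFn_toLp, hv.coeFn_toLp] with x hux hvx
    rw [hux, hvx]

lemma ae_prod_ne [MeasurableEq α] [NullSingletonClass μ] [SFinite μ] :
    ∀ᵐ p ∂μ.prod μ, p.1 ≠ p.2 := by
  rw [ae_iff, Measure.prod_apply (by simpa [Set.diagonal] using measurableSet_diagonal (α := α))]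
  simp [Set.preimage, measure_singleton]

lemma integrable_add_sub_two_mul_div {β : Type*} [MeasurableSpace β] {ν : Measure β}
    {f g h K : β → ℝ} (hf : Integrable (fun p => f p / K p) ν)
    (hg : Integrable (fun p => g p / K p) ν) (hh : Integrable (fun p => h p / K p) ν) :
    Integrable (fun p => (f p + g p - 2 * h p) / K p) ν := by
  refine ((hf.add hg).sub (hh.const_mul 2)).congr (.of_forall fun p => ?_)
  simp only [Pi.add_apply, Pi.sub_apply]
  ring

lemma integral_exchangeDefect_div_pos [SFinite μ] {u v : α → E} (hu : MemLp u 2 μ)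
    (hv : MemLp v 2 μ) (hu0 : ∫ x, ‖u x‖ ^ 2 ∂μ ≠ 0) (hv0 : ∫ x, ‖v x‖ ^ 2 ∂μ ≠ 0)
    (horth : ∫ x, ⟪u x, v x⟫_𝕜 ∂μ = 0) {K : α × α → ℝ} (hK : ∀ᵐ p ∂μ.prod μ, 0 < K p)
    (hint : Integrable (fun p => exchangeDefect 𝕜 u v p / K p) (μ.prod μ)) :
    0 < ∫ p, exchangeDefect 𝕜 u v p / K p ∂μ.prod μ := by
  have hnonneg : 0 ≤ᵐ[μ.prod μ] fun p => exchangeDefect 𝕜 u v p / K p := by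
    filter_upwards [hK] with p hp using div_nonneg (exchangeDefect_nonneg u v p) hp.le
  refine (integral_nonneg_of_ae hnonneg).lt_of_ne fun hzero => ?_
  have hsaturated : ∀ᵐ p ∂μ.prod μ,
      RCLike.re (⟪v p.1, u p.1⟫_𝕜 * ⟪u p.2, v p.2⟫_𝕜) = ‖u p.1‖ ^ 2 * ‖v p.2‖ ^ 2 := by
    filter_upwards [(integral_eq_zero_iff_of_nonneg_ae hnonneg hint).1 hzero.symm, hK]
      with p hp hKp
    exact re_inner_mul_inner_eq_of_exchangeDefect_eq_zero
      ((div_eq_zero_iff.1 hp).resolve_right hKp.ne')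
  have hexchange :
      ∫ p, RCLike.re (⟪v p.1, u p.1⟫_𝕜 * ⟪u p.2, v p.2⟫_𝕜) ∂μ.prod μ = 0 := by
    rw [integral_re ((hv.integrable_inner hu).mul_prod (hu.integrable_inner hv)),
      integral_prod_mul (fun x => ⟪v x, u x⟫_𝕜) (fun y => ⟪u y, v y⟫_𝕜), horth, mul_zero,
      map_zero]
  have hdirect : ∫ p, ‖u p.1‖ ^ 2 * ‖v p.2‖ ^ 2 ∂μ.prod μ ≠ 0 := by
    rw [integral_prod_mul (fun x => ‖u x‖ ^ 2) (fun y => ‖v y‖ ^ 2)]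
    exact mul_ne_zero hu0 hv0
  exact hdirect (integral_congr_ae hsaturated ▸ hexchange)

end

/-- The exchange integrand is `|S(x,y)|² / |x - y|` with `|S(x,y)|²` expanded in terms of
`u` and `v`. -/
theorem QSS_negative
    (u v : R3 → Spinor)
    (hnu : ∫ x : R3, ‖u x‖ ^ 2 = 1) (hnv : ∫ x : R3, ‖v x‖ ^ 2 = 1)
    (horth : ∫ x : R3, (inner ℂ (u x) (v x) : ℂ) = 0)
    (huL2 : MemLp u 2 (volume : Measure R3)) (hvL2 : MemLp v 2 (volume : Measure R3))
    (hint_uu : Integrable (fun p : R3 × R3 => ‖u p.1‖ ^ 2 * ‖u p.2‖ ^ 2 / ‖p.1 - p.2‖))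
    (hint_vv : Integrable (fun p : R3 × R3 => ‖v p.1‖ ^ 2 * ‖v p.2‖ ^ 2 / ‖p.1 - p.2‖))
    (hint_uv : Integrable (fun p : R3 × R3 => ‖u p.1‖ ^ 2 * ‖v p.2‖ ^ 2 / ‖p.1 - p.2‖))
    (hint_ex : Integrable (fun p : R3 × R3 =>
      ((inner ℂ (v p.1) (u p.1) : ℂ) * (inner ℂ (u p.2) (v p.2) : ℂ)).re / ‖p.1 - p.2‖)) :
    (1 / 2) * (∫ p : R3 × R3,
        (‖u p.1‖ ^ 2 - ‖v p.1‖ ^ 2) * (‖u p.2‖ ^ 2 - ‖v p.2‖ ^ 2) / ‖p.1 - p.2‖)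
      - (1 / 2) * (∫ p : R3 × R3,
        (‖u p.1‖ ^ 2 * ‖u p.2‖ ^ 2 + ‖v p.1‖ ^ 2 * ‖v p.2‖ ^ 2
          - 2 * ((inner ℂ (v p.1) (u p.1) : ℂ) * (inner ℂ (u p.2) (v p.2) : ℂ)).re)
          / ‖p.1 - p.2‖) < 0 := by
  rw [Measure.volume_eq_prod] at hint_uu hint_vv hint_uv hint_ex ⊢
  have hint_vu : Integrable (fun p : R3 × R3 => ‖v p.1‖ ^ 2 * ‖u p.2‖ ^ 2 / ‖p.1 - p.2‖)
      (volume.prod volume) :=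
    hint_uv.swap.congr (.of_forall fun p => by simp [norm_sub_rev, mul_comm])
  have hint_exchange := integrable_add_sub_two_mul_div hint_uu hint_vv hint_ex
  have hint_defect : Integrable (fun p => exchangeDefect ℂ u v p / ‖p.1 - p.2‖)
      (volume.prod volume) :=
    integrable_add_sub_two_mul_div hint_uv hint_vu hint_ex
  have hpos := integral_exchangeDefect_div_pos huL2 hvL2 (by simp [hnu]) (by simp [hnv]) horth
    (ae_prod_ne.mono fun p hp => norm_pos_iff.2 (sub_ne_zero.2 hp)) hint_defect
  have hsplit : ∫ p, (‖u p.1‖ ^ 2 - ‖v p.1‖ ^ 2) * (‖u p.2‖ ^ 2 - ‖v p.2‖ ^ 2) / ‖p.1 - p.2‖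
        ∂volume.prod volume
      = (∫ p, (‖u p.1‖ ^ 2 * ‖u p.2‖ ^ 2 + ‖v p.1‖ ^ 2 * ‖v p.2‖ ^ 2
          - 2 * ((inner ℂ (v p.1) (u p.1) : ℂ) * (inner ℂ (u p.2) (v p.2) : ℂ)).re)
          / ‖p.1 - p.2‖ ∂volume.prod volume)
        - ∫ p, exchangeDefect ℂ u v p / ‖p.1 - p.2‖ ∂volume.prod volume := by
    rw [← integral_sub hint_exchange hint_defect]
    congr 1 with p
    simp only [exchangeDefect, RCLike.re_to_complex]
    ring
  linarith
end
end

section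
/- Let Γ and Λ be orthogonal projections on a Hilbert space such that Γ − Λ is trace class. If Λ_ε is another orthogonal projection with ‖Λ − Λ_ε‖₁ < 1 (trace norm), then tr(Γ − Λ_ε) = tr(Γ − Λ). In particular, the map ε ↦ tr(Γ − Λ_ε) is locally constant along trace-norm-continuous families of projections. -/
open scoped InnerProductSpace

noncomputable section

variable {E : Type*} [NormedAddCommGroup E] [InnerProductSpace ℂ E] [CompleteSpace E]

/-- `T` has a singular value decomposition with singular values `s` (so `T` is a
trace-class (indeed compact, with summable singular values) operator). -/
def HasSVD (T : E →L[ℂ] E) (s : ℕ → ℝ) : Prop :=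
  ∃ e f : ℕ → E, Orthonormal ℂ e ∧ Orthonormal ℂ f ∧ (∀ n, 0 ≤ s n) ∧ Summable s ∧
    ∀ x, T x = ∑' n, ((s n : ℂ) * ⟪e n, x⟫_ℂ) • f n

/-! Put `A = Λ - Λε` and `B = 1 - Λ - Λε`. For idempotents `Λ`, `Λε` one has `A² + B² = 1`
and `BA = -AB`. Cyclicity of the trace and anticommutation give
`tr (A²ᵏ⁺¹ B²) = -tr (A²ᵏ⁺¹ B²) = 0`, hence `tr A = tr A²ᵏ⁺¹` for every `k`, and
`|tr A²ᵏ⁺¹| ≤ ‖A‖₁ ‖A‖²ᵏ → 0` because `‖A‖ ≤ ‖A‖₁ < 1`. So `tr (Γ - Λε) - tr (Γ - Λ) = tr A = 0`.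
The traces `tr (X A Y)` are computed from the singular value expansion of `A`, exchanging the
sum over the Hilbert basis with the sum over the singular values. -/

namespace HilbertBasis

variable {ι 𝕜 F : Type*} [RCLike 𝕜] [NormedAddCommGroup F] [InnerProductSpace 𝕜 F]
  (b : HilbertBasis ι 𝕜 F)

theorem hasSum_norm_inner_sq (x : F) : HasSum (fun i => ‖⟪b i, x⟫_𝕜‖ ^ 2) (‖x‖ ^ 2) := by
  have h := b.hasSum_inner_mul_inner x x
  rw [inner_self_eq_norm_sq_to_K, ← RCLike.ofReal_pow] at h
  refine (RCLike.hasSum_ofReal 𝕜).mp (h.congr_fun fun i => ?_)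
  rw [← inner_conj_symm (b i), RCLike.norm_conj, RCLike.mul_conj, RCLike.ofReal_pow]

theorem hasSum_tsum_mul_inner_mul_inner {κ : Type*} {c : κ → 𝕜} (hc : Summable fun n => ‖c n‖)
    {u v : κ → F} {C : ℝ} (hu : ∀ n, ‖u n‖ ≤ C) (hv : ∀ n, ‖v n‖ ≤ C) :
    HasSum (fun i => ∑' n, c n * (⟪u n, b i⟫_𝕜 * ⟪b i, v n⟫_𝕜)) (∑' n, c n * ⟪u n, v n⟫_𝕜) := by
  set G : κ × ι → 𝕜 := fun p => c p.1 * (⟪u p.1, b p.2⟫_𝕜 * ⟪b p.2, v p.1⟫_𝕜)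
  -- AM-GM and Parseval bound the fibre sums of `‖G‖` by `‖c n‖ * C ^ 2`.
  set bound : κ → ι → ℝ := fun n i => ‖c n‖ * ((‖⟪b i, u n⟫_𝕜‖ ^ 2 + ‖⟪b i, v n⟫_𝕜‖ ^ 2) / 2)
  have hG_le (n : κ) (i : ι) : ‖G (n, i)‖ ≤ bound n i := by
    simp only [G, bound, norm_mul, norm_inner_symm (u n)]
    gcongr
    nlinarith [two_mul_le_add_sq ‖⟪b i, u n⟫_𝕜‖ ‖⟪b i, v n⟫_𝕜‖]
  have h_bound (n : κ) : HasSum (bound n) (‖c n‖ * ((‖u n‖ ^ 2 + ‖v n‖ ^ 2) / 2)) :=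
    (((b.hasSum_norm_inner_sq _).add (b.hasSum_norm_inner_sq _)).div_const 2).mul_left _
  have hG_fibre (n : κ) : Summable fun i => ‖G (n, i)‖ :=
    (h_bound n).summable.of_nonneg_of_le (fun _ => norm_nonneg _) (hG_le n)
  have hG_fibre_le (n : κ) : ∑' i, ‖G (n, i)‖ ≤ ‖c n‖ * C ^ 2 :=
    calc ∑' i, ‖G (n, i)‖ ≤ ‖c n‖ * ((‖u n‖ ^ 2 + ‖v n‖ ^ 2) / 2) :=
          hasSum_le (hG_le n) (hG_fibre n).hasSum (h_bound n)
      _ ≤ ‖c n‖ * C ^ 2 := by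
          gcongr
          have := pow_le_pow_left₀ (norm_nonneg _) (hu n) 2
          have := pow_le_pow_left₀ (norm_nonneg _) (hv n) 2
          linarith
  have hG : Summable G :=
    .of_norm <| (summable_prod_of_nonneg fun _ => norm_nonneg _).mpr ⟨hG_fibre,
      (hc.mul_right _).of_nonneg_of_le (fun _ => tsum_nonneg fun _ => norm_nonneg _) hG_fibre_le⟩
  have hfibre (i : ι) : HasSum (fun n => G (n, i)) (∑' n, G (n, i)) :=
    (hG.prod_symm.prod_factor i).hasSum
  convert HasSum.prod_fiberwise hG.prod_symm.hasSum hfibre using 1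
  change _ = ∑' p, G (Equiv.prodComm ι κ p)
  rw [(Equiv.prodComm ι κ).tsum_eq G, hG.tsum_prod]
  simp only [G, tsum_mul_left, b.tsum_inner_mul_inner]

end HilbertBasis

/-- For `A = ∑ₙ sₙ |fₙ⟩⟨eₙ|`, the functional `X ↦ tr (X A)`. -/
def traceMulOfSVD {F : Type*} [NormedAddCommGroup F] [InnerProductSpace ℂ F] (s : ℕ → ℝ)
    (e f : ℕ → F) : (F →L[ℂ] F) →L[ℂ] ℂ :=
  ∑' n, (s n : ℂ) • (innerSL ℂ (e n)).comp (ContinuousLinearMap.apply ℂ F (f n))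

namespace HasSVD

variable {F : Type*} [NormedAddCommGroup F] [InnerProductSpace ℂ F]
  {A : F →L[ℂ] F} {s : ℕ → ℝ} {e f : ℕ → F}

theorem norm_term_le (he : Orthonormal ℂ e) (hf : Orthonormal ℂ f) (hs : ∀ n, 0 ≤ s n)
    (x : F) (n : ℕ) : ‖((s n : ℂ) * ⟪e n, x⟫_ℂ) • f n‖ ≤ s n * ‖x‖ := by
  rw [norm_smul, norm_mul, hf.1 n, mul_one, Complex.norm_of_nonneg (hs n)]
  exact mul_le_mul_of_nonneg_left (by simpa [he.1 n] using norm_inner_le_norm (𝕜 := ℂ) (e n) x)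
    (hs n)

theorem opNorm_le_tsum (he : Orthonormal ℂ e) (hf : Orthonormal ℂ f) (hs : ∀ n, 0 ≤ s n)
    (hsum : Summable s) (hA : ∀ x, A x = ∑' n, ((s n : ℂ) * ⟪e n, x⟫_ℂ) • f n) :
    ‖A‖ ≤ ∑' n, s n := by
  refine A.opNorm_le_bound (tsum_nonneg hs) fun x => ?_
  rw [hA x, ← tsum_mul_right]
  exact tsum_of_norm_bounded (hsum.mul_right ‖x‖).hasSum (norm_term_le he hf hs x)

theorem inner_apply_apply_eq_tsum [CompleteSpace F] (he : Orthonormal ℂ e)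
    (hf : Orthonormal ℂ f) (hs : ∀ n, 0 ≤ s n) (hsum : Summable s)
    (hA : ∀ x, A x = ∑' n, ((s n : ℂ) * ⟪e n, x⟫_ℂ) • f n) (X : F →L[ℂ] F) (v x : F) :
    ⟪v, X (A x)⟫_ℂ = ∑' n, (s n : ℂ) * (⟪e n, x⟫_ℂ * ⟪v, X (f n)⟫_ℂ) := by
  have hsumm : Summable fun n => ((s n : ℂ) * ⟪e n, x⟫_ℂ) • f n :=
    .of_norm_bounded (hsum.mul_right ‖x‖) (norm_term_le he hf hs x)
  rw [hA x]
  simpa [mul_assoc, inner_smul_right] using ((innerSL ℂ v).comp X).map_tsum hsumm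

theorem summable_traceMulOfSVD_series (he : Orthonormal ℂ e) (hf : Orthonormal ℂ f)
    (hs : ∀ n, 0 ≤ s n) (hsum : Summable s) :
    Summable fun n => (s n : ℂ) • (innerSL ℂ (e n)).comp (ContinuousLinearMap.apply ℂ F (f n)) := by
  refine Summable.of_norm_bounded (E := (F →L[ℂ] F) →L[ℂ] ℂ) hsum fun n => ?_
  have happly : ‖ContinuousLinearMap.apply ℂ F (f n)‖ ≤ 1 :=
    ContinuousLinearMap.opNorm_le_bound _ zero_le_one fun X => by
      simpa [hf.1 n] using X.le_opNorm (f n)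
  refine (ContinuousLinearMap.opNorm_smul_le _ _).trans ?_
  rw [Complex.norm_of_nonneg (hs n)]
  refine mul_le_of_le_one_right (hs n) ((ContinuousLinearMap.opNorm_comp_le _ _).trans ?_)
  rwa [innerSL_apply_norm, he.1 n, one_mul]

theorem traceMulOfSVD_apply (he : Orthonormal ℂ e) (hf : Orthonormal ℂ f) (hs : ∀ n, 0 ≤ s n)
    (hsum : Summable s) (X : F →L[ℂ] F) :
    traceMulOfSVD s e f X = ∑' n, (s n : ℂ) * ⟪e n, X (f n)⟫_ℂ := by
  simpa [traceMulOfSVD] using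
    (ContinuousLinearMap.apply ℂ ℂ X).map_tsum (summable_traceMulOfSVD_series he hf hs hsum)

theorem hasSum_inner_mul_mul_apply [CompleteSpace F] {ι : Type*} (he : Orthonormal ℂ e)
    (hf : Orthonormal ℂ f) (hs : ∀ n, 0 ≤ s n) (hsum : Summable s)
    (hA : ∀ x, A x = ∑' n, ((s n : ℂ) * ⟪e n, x⟫_ℂ) • f n) (b : HilbertBasis ι ℂ F)
    (X Y : F →L[ℂ] F) :
    HasSum (fun i => ⟪b i, (X * A * Y) (b i)⟫_ℂ) (traceMulOfSVD s e f (Y * X)) := by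
  set Y' := ContinuousLinearMap.adjoint Y
  have hdiag (i : ι) : ⟪b i, (X * A * Y) (b i)⟫_ℂ
      = ∑' n, (s n : ℂ) * (⟪Y' (e n), b i⟫_ℂ * ⟪b i, X (f n)⟫_ℂ) := by
    simp [inner_apply_apply_eq_tsum he hf hs hsum hA, Y', ContinuousLinearMap.adjoint_inner_left]
  have hu (n : ℕ) : ‖Y' (e n)‖ ≤ ‖Y'‖ + ‖X‖ := by
    simpa [he.1 n] using (Y'.le_opNorm (e n)).trans (le_add_of_nonneg_right (norm_nonneg X))
  have hv (n : ℕ) : ‖X (f n)‖ ≤ ‖Y'‖ + ‖X‖ := by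
    simpa [hf.1 n] using (X.le_opNorm (f n)).trans (le_add_of_nonneg_left (norm_nonneg Y'))
  have hc : Summable fun n => ‖(s n : ℂ)‖ :=
    hsum.congr fun n => (Complex.norm_of_nonneg (hs n)).symm
  have hvalue : ∑' n, (s n : ℂ) * ⟪Y' (e n), X (f n)⟫_ℂ = traceMulOfSVD s e f (Y * X) := by
    rw [traceMulOfSVD_apply he hf hs hsum]
    simp [Y', ContinuousLinearMap.adjoint_inner_left]
  rw [funext hdiag, ← hvalue]
  exact b.hasSum_tsum_mul_inner_mul_inner hc hu hv

end HasSVD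

namespace IsIdempotentElem

variable {R : Type*} [Ring R] {p q : R}

theorem one_sub_sub_mul_sub (hp : IsIdempotentElem p) (hq : IsIdempotentElem q) :
    (1 - p - q) * (p - q) = -((p - q) * (1 - p - q)) := by
  simp only [sub_mul, mul_sub, one_mul, mul_one, hp.eq, hq.eq]
  abel

theorem sub_mul_sub_add_one_sub_sub_mul (hp : IsIdempotentElem p) (hq : IsIdempotentElem q) :
    (p - q) * (p - q) + (1 - p - q) * (1 - p - q) = 1 := by
  simp only [sub_mul, mul_sub, one_mul, mul_one, hp.eq, hq.eq]
  abel

end IsIdempotentElem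

section Anticommuting

variable {R M F : Type*} [AddCommGroup M] [IsAddTorsionFree M] [FunLike F R M]
  {a b : R}

/-- Think of `φ = tr (· a)` and `τ = tr`: `hφ` is the cyclicity of the trace. -/
theorem map_pow_mul_self_eq_map_one [Ring R] [AddMonoidHomClass F R M]
    (hba : b * a = -(a * b)) (hsq : a * a + b * b = 1) (φ : F) (τ : R → M)
    (hφ : ∀ x y, φ (y * x) = τ (x * a * y)) (k : ℕ) : φ ((a * a) ^ k) = φ 1 := by
  have hb_comm : Commute b (a * a) := by
    calc b * (a * a) = b * a * a := (mul_assoc _ _ _).symm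
      _ = -(a * b) * a := by rw [hba]
      _ = -(a * (b * a)) := by noncomm_ring
      _ = a * a * b := by rw [hba]; noncomm_ring
  have hcross (c : R) (hc : Commute b c) : φ (c * (b * b)) = 0 := by
    have h₁ : φ (c * (b * b)) = τ (c * b * a * b) := by
      rw [← hφ, ← mul_assoc b, hc.eq, mul_assoc]
    have h₂ : φ (-(c * (b * b))) = τ (c * b * a * b) :=
      calc φ (-(c * (b * b))) = φ (b * b * -c) := by rw [mul_neg, (hc.mul_left hc).eq]
        _ = τ (-c * a * (b * b)) := hφ _ _
        _ = τ (c * b * a * b) := by rw [mul_assoc c b a, hba]; congr 1; noncomm_ring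
    rw [map_neg, ← h₁] at h₂
    exact self_eq_neg.mp h₂.symm
  induction k with
  | zero => rw [pow_zero]
  | succ k ih =>
    rw [← ih, ← add_zero (φ ((a * a) ^ (k + 1))), ← hcross _ (hb_comm.pow_right k), ← map_add,
      pow_succ, ← mul_add, hsq, mul_one]

theorem map_one_eq_zero_of_anticommute [NormedRing R] [TopologicalSpace M] [T2Space M]
    [AddMonoidHomClass F R M] (hba : b * a = -(a * b)) (hsq : a * a + b * b = 1) (ha : ‖a‖ < 1)
    (φ : F) (hφc : Continuous φ) (τ : R → M) (hφ : ∀ x y, φ (y * x) = τ (x * a * y)) :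
    φ 1 = 0 := by
  have haa : ‖a * a‖ < 1 :=
    (norm_mul_le a a).trans_lt (mul_lt_one_of_nonneg_of_lt_one_left (norm_nonneg a) ha ha.le)
  have hlim := (hφc.tendsto 0).comp (tendsto_pow_atTop_nhds_zero_of_norm_lt_one haa)
  rw [map_zero] at hlim
  refine tendsto_nhds_unique (tendsto_const_nhds.congr fun k => ?_) hlim
  exact (map_pow_mul_self_eq_map_one hba hsq φ τ hφ k).symm

end Anticommuting

theorem IsIdempotentElem.hasSum_inner_sub_apply_eq_zero {ι : Type*} {P Q : E →L[ℂ] E}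
    (hP : IsIdempotentElem P) (hQ : IsIdempotentElem Q) {s : ℕ → ℝ} (hPQ : HasSVD (P - Q) s)
    (hs₁ : ∑' n, s n < 1) (b : HilbertBasis ι ℂ E) :
    HasSum (fun i => ⟪b i, (P - Q) (b i)⟫_ℂ) 0 := by
  obtain ⟨e, f, he, hf, hs, hsum, hA⟩ := hPQ
  have htrace := HasSVD.hasSum_inner_mul_mul_apply he hf hs hsum hA b
  have hone : traceMulOfSVD s e f 1 = 0 :=
    map_one_eq_zero_of_anticommute (hP.one_sub_sub_mul_sub hQ)
      (hP.sub_mul_sub_add_one_sub_sub_mul hQ)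
      ((HasSVD.opNorm_le_tsum he hf hs hsum hA).trans_lt hs₁) _ (map_continuous _)
      (fun T => ∑' i, ⟪b i, T (b i)⟫_ℂ) fun X Y => (htrace X Y).tsum_eq.symm
  simpa [hone] using htrace 1 1

theorem trace_locally_constant_general {ι : Type*}
    (Γ Λ Λε : E →L[ℂ] E)
    (hΛ : IsSelfAdjoint Λ ∧ IsIdempotentElem Λ)
    (hΛε : IsSelfAdjoint Λε ∧ IsIdempotentElem Λε)
    (hsmall : ∃ s : ℕ → ℝ, HasSVD (Λ - Λε) s ∧ (∑' n, s n) < 1)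
    (b : HilbertBasis ι ℂ E) (t1 t2 : ℂ)
    (ht1 : HasSum (fun i => ⟪b i, (Γ - Λ) (b i)⟫_ℂ) t1)
    (ht2 : HasSum (fun i => ⟪b i, (Γ - Λε) (b i)⟫_ℂ) t2) :
    t2 = t1 := by
  obtain ⟨s, hsvd, hs₁⟩ := hsmall
  have hzero := hΛ.2.hasSum_inner_sub_apply_eq_zero hΛε.2 hsvd hs₁ b
  rw [← sub_eq_zero]
  refine (ht2.sub ht1).unique (hzero.congr_fun fun i => ?_)
  simp only [sub_apply, inner_sub_right]
  ring

/-- Let `Γ`, `Λ` be orthogonal projections with `Γ − Λ` trace class. If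
`Λ_ε` is another orthogonal projection with trace-norm distance `‖Λ − Λ_ε‖₁ < 1` from
`Λ` (in particular `Γ − Λ_ε` is trace class), then `tr(Γ − Λ_ε) = tr(Γ − Λ)` (traces
computed in any fixed Hilbert basis). -/
theorem trace_locally_constant {ι : Type*}
    (Γ Λ Λε : E →L[ℂ] E)
    (hΓ : IsSelfAdjoint Γ ∧ IsIdempotentElem Γ)
    (hΛ : IsSelfAdjoint Λ ∧ IsIdempotentElem Λ)
    (hΛε : IsSelfAdjoint Λε ∧ IsIdempotentElem Λε)
    (hTC1 : ∃ s : ℕ → ℝ, HasSVD (Γ - Λ) s)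
    (hTC2 : ∃ s : ℕ → ℝ, HasSVD (Γ - Λε) s)
    (hsmall : ∃ s : ℕ → ℝ, HasSVD (Λ - Λε) s ∧ (∑' n, s n) < 1)
    (b : HilbertBasis ι ℂ E) (t1 t2 : ℂ)
    (ht1 : HasSum (fun i => ⟪b i, (Γ - Λ) (b i)⟫_ℂ) t1)
    (ht2 : HasSum (fun i => ⟪b i, (Γ - Λε) (b i)⟫_ℂ) t2) :
    t2 = t1 :=
  trace_locally_constant_general Γ Λ Λε hΛ hΛε hsmall b t1 t2 ht1 ht2
end
end
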